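/- arXiv:0903.5436 — 3 statements merged into one kernel-verified Lean document; each statement's English description precedes it below -/
import Mathlib

section
/- Let (S; ·, \, /) be an algebra satisfying system (A), and define x ⋆ y := (x·y)/y. Then (S; ⋆) is a rectangular band: for all x, y, z in S, x ⋆ x = x, (x ⋆ y) ⋆ z = x ⋆ z, and x ⋆ (y ⋆ z) = x ⋆ z (in particular ⋆ is associative). -/
/-
By (A3), `w ⋆ z = (w/z)·z`, and (A4) reads `(x ⋆ y)/z = x/z`; together they give
`(x ⋆ y) ⋆ z = x ⋆ z`. Axiom (A5) says that `⋆ z` commutes with left multiplication,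
`(x·y) ⋆ z = x·(y ⋆ z)`. Idempotence follows by cancelling `x/x` on the left in
`(x/x)·(x ⋆ x) = (x ⋆ x) ⋆ x = x ⋆ x = (x/x)·x`, and right absorption because
`x ⋆ (y ⋆ z) = (x/(y ⋆ z))·(y ⋆ z) = ((x/(y ⋆ z))·y) ⋆ z` is a fixed point of `⋆ z`.
-/

/-- The star operation `x ⋆ y := (x·y)/y`. -/
def star {S : Type*} (mul rd : S → S → S) (x y : S) : S := rd (mul x y) y

section RectangularBand

variable {S : Type*} {mul ld rd : S → S → S}

theorem star_eq_mul_rd (A3 : ∀ x y : S, mul (rd x y) y = rd (mul x y) y) (x y : S) :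
    star mul rd x y = mul (rd x y) y :=
  (A3 x y).symm

theorem rd_star (A3 : ∀ x y : S, mul (rd x y) y = rd (mul x y) y)
    (A4 : ∀ x y z : S, rd (mul (rd x y) y) z = rd x z) (x y z : S) :
    rd (star mul rd x y) z = rd x z := by
  rw [star_eq_mul_rd A3, A4]

theorem star_star_left (A3 : ∀ x y : S, mul (rd x y) y = rd (mul x y) y)
    (A4 : ∀ x y z : S, rd (mul (rd x y) y) z = rd x z) (x y z : S) :
    star mul rd (star mul rd x y) z = star mul rd x z := by
  rw [star_eq_mul_rd A3, rd_star A3 A4, ← star_eq_mul_rd A3]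

theorem star_mul_left (A3 : ∀ x y : S, mul (rd x y) y = rd (mul x y) y)
    (A5 : ∀ x y z : S, mul (rd (mul x y) z) z = mul x (mul (rd y z) z)) (x y z : S) :
    star mul rd (mul x y) z = mul x (star mul rd y z) := by
  rw [star_eq_mul_rd A3, A5, ← star_eq_mul_rd A3]

theorem star_self (A1 : ∀ x y : S, ld x (mul x y) = y)
    (A3 : ∀ x y : S, mul (rd x y) y = rd (mul x y) y)
    (A4 : ∀ x y z : S, rd (mul (rd x y) y) z = rd x z)
    (A5 : ∀ x y z : S, mul (rd (mul x y) z) z = mul x (mul (rd y z) z)) (x : S) :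
    star mul rd x x = x := by
  have hx : mul (rd x x) x = star mul rd x x := (star_eq_mul_rd A3 x x).symm
  apply Function.LeftInverse.injective (g := ld (rd x x)) (A1 (rd x x))
  calc mul (rd x x) (star mul rd x x) = star mul rd (mul (rd x x) x) x :=
        (star_mul_left A3 A5 _ _ _).symm
    _ = star mul rd x x := by rw [hx, star_star_left A3 A4]
    _ = mul (rd x x) x := hx.symm

theorem star_star_right (A3 : ∀ x y : S, mul (rd x y) y = rd (mul x y) y)
    (A4 : ∀ x y z : S, rd (mul (rd x y) y) z = rd x z)
    (A5 : ∀ x y z : S, mul (rd (mul x y) z) z = mul x (mul (rd y z) z)) (x y z : S) :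
    star mul rd x (star mul rd y z) = star mul rd x z := by
  set u := mul (rd x (star mul rd y z)) y
  have hu : star mul rd x (star mul rd y z) = star mul rd u z := by
    rw [star_eq_mul_rd A3 x, star_mul_left A3 A5]
  calc star mul rd x (star mul rd y z) = star mul rd (star mul rd u z) z := by
        rw [hu, star_star_left A3 A4]
    _ = star mul rd x z := by rw [← hu, star_star_left A3 A4]

end RectangularBand

theorem star_rectangular_band_general {S : Type*} (mul ld rd : S → S → S)
    (A1 : ∀ x y : S, ld x (mul x y) = y)
    (A3 : ∀ x y : S, mul (rd x y) y = rd (mul x y) y)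
    (A4 : ∀ x y z : S, rd (mul (rd x y) y) z = rd x z)
    (A5 : ∀ x y z : S, mul (rd (mul x y) z) z = mul x (mul (rd y z) z)) :
    (∀ x : S, star mul rd x x = x) ∧
    (∀ x y z : S, star mul rd (star mul rd x y) z = star mul rd x z) ∧
    (∀ x y z : S, star mul rd x (star mul rd y z) = star mul rd x z) :=
  ⟨star_self A1 A3 A4 A5, star_star_left A3 A4, star_star_right A3 A4 A5⟩

/-- In an algebra satisfying system (A), `(S; ⋆)` is a rectangular band:
`x ⋆ x = x`, `(x ⋆ y) ⋆ z = x ⋆ z` and `x ⋆ (y ⋆ z) = x ⋆ z`. -/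
theorem star_rectangular_band {S : Type*} (mul ld rd : S → S → S)
    (A1 : ∀ x y : S, ld x (mul x y) = y)
    (A2 : ∀ x y : S, mul x (ld x y) = y)
    (A3 : ∀ x y : S, mul (rd x y) y = rd (mul x y) y)
    (A4 : ∀ x y z : S, rd (mul (rd x y) y) z = rd x z)
    (A5 : ∀ x y z : S, mul (rd (mul x y) z) z = mul x (mul (rd y z) z)) :
    (∀ x : S, star mul rd x x = x) ∧
    (∀ x y z : S, star mul rd (star mul rd x y) z = star mul rd x z) ∧
    (∀ x y z : S, star mul rd x (star mul rd y z) = star mul rd x z) :=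
  star_rectangular_band_general mul ld rd A1 A3 A4 A5
end

section
/- Let (S; ·, \, /) be an algebra satisfying system (A). Then S satisfies the identity (x \ x)·z = (y \ y)·z (for all x, y, z) if and only if S is a right product right loop, i.e., there exist a right loop Q, a right zero semigroup R, and a bijection f : S → Q × R preserving each of the operations ·, \ and / (the product carrying componentwise operations). -/
/-!
An element `x` of an algebra satisfying system (A) is determined by two functions: the left
coordinate `rd x = (z ↦ x / z)` and the right coordinate `z ↦ (z / x) · x`, since
`x = (x / x) · x` and `(x / y) · y` depends only on the left coordinate of `x` and the right
coordinate of `y`. Conversely `(x / y) · y` realizes any pair of coordinates, so `S` is the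
product of its two quotients by the kernels of these coordinate maps. The operations descend to
the left quotient, where they form a quasigroup, while the right coordinate of `x · y`, `x \ y`
and `x / y` is that of `y`, so the right quotient is a right zero semigroup. Since `w / z = ((w · z) / z) / z`,
the identity `(x \ x) · z = (y \ y) · z` makes all `x \ x` equal in the left quotient.
-/

universe u

variable {S : Type*} {mul ld rd : S → S → S}

structure IsSystemA (mul ld rd : S → S → S) : Prop where
  ld_mul : ∀ x y, ld x (mul x y) = y
  mul_ld : ∀ x y, mul x (ld x y) = y
  rd_mul_eq_mul_rd : ∀ x y, mul (rd x y) y = rd (mul x y) y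
  rd_mul_rd : ∀ x y z, rd (mul (rd x y) y) z = rd x z
  mul_rd_mul : ∀ x y z, mul (rd (mul x y) z) z = mul x (mul (rd y z) z)

def rightCoord (mul rd : S → S → S) (y : S) : S → S := fun z => mul (rd z y) y

namespace IsSystemA

theorem mul_left_injective (h : IsSystemA mul ld rd) (x : S) : Function.Injective (mul x) :=
  Function.LeftInverse.injective (h.ld_mul x)

theorem rd_self_mul (h : IsSystemA mul ld rd) (y : S) : mul (rd y y) y = y :=
  h.mul_left_injective (rd y y) <| by rw [← h.mul_rd_mul, h.rd_mul_rd]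

theorem rd_rd_mul (h : IsSystemA mul ld rd) (x y z : S) : rd (rd (mul x y) y) z = rd x z := by
  rw [← h.rd_mul_eq_mul_rd, h.rd_mul_rd]

theorem mul_rd_ld (h : IsSystemA mul ld rd) (x y z : S) :
    mul (rd (ld x y) z) z = ld x (mul (rd y z) z) :=
  h.mul_left_injective x <| by rw [h.mul_ld, ← h.mul_rd_mul, h.mul_ld]

theorem rightCoord_eq_of_rd_mul_eq (h : IsSystemA mul ld rd) {w z : S}
    (hw : mul (rd w z) z = w) : rightCoord mul rd w = rightCoord mul rd z := by
  funext x
  calc mul (rd x w) w = mul (rd x w) (mul (rd w z) z) := by rw [hw]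
    _ = mul (rd x z) z := by rw [← h.mul_rd_mul, h.rd_mul_rd]

theorem rightCoord_mul (h : IsSystemA mul ld rd) (x y : S) :
    rightCoord mul rd (mul x y) = rightCoord mul rd y :=
  h.rightCoord_eq_of_rd_mul_eq <| by rw [h.mul_rd_mul, h.rd_self_mul]

theorem rightCoord_ld (h : IsSystemA mul ld rd) (x y : S) :
    rightCoord mul rd (ld x y) = rightCoord mul rd y :=
  h.rightCoord_eq_of_rd_mul_eq <| by rw [h.mul_rd_ld, h.rd_self_mul]

theorem rightCoord_rd (h : IsSystemA mul ld rd) (x y : S) :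
    rightCoord mul rd (rd x y) = rightCoord mul rd y :=
  h.rightCoord_eq_of_rd_mul_eq <| by rw [h.rd_mul_eq_mul_rd, h.rd_mul_rd]

theorem eq_of_rd_eq_of_rightCoord_eq (h : IsSystemA mul ld rd) {x y : S} (h₁ : rd x = rd y)
    (h₂ : rightCoord mul rd x = rightCoord mul rd y) : x = y :=
  calc x = mul (rd x x) x := (h.rd_self_mul x).symm
    _ = mul (rd x y) y := congrFun h₂ x
    _ = y := by rw [h₁, h.rd_self_mul]

theorem mul_eq_of_rd_eq (h : IsSystemA mul ld rd) {x x' : S} (hx : rd x = rd x') :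
    mul x = mul x' := by
  have key (x w : S) : mul x w = mul (mul (rd x w) w) w := by
    rw [h.rd_mul_eq_mul_rd, h.mul_rd_mul, h.rd_self_mul]
  funext w
  rw [key x, key x', hx]

theorem ld_eq_of_rd_eq (h : IsSystemA mul ld rd) {x x' : S} (hx : rd x = rd x') :
    ld x = ld x' := by
  funext w
  apply h.mul_left_injective x'
  rw [h.mul_ld, ← h.mul_eq_of_rd_eq hx, h.mul_ld]

theorem rd_mul_congr (h : IsSystemA mul ld rd) {x x' y y' : S} (hx : rd x = rd x')
    (hy : rd y = rd y') : rd (mul x y) = rd (mul x' y') := by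
  have key (x y z : S) : rd (mul x y) z = rd (mul x (mul (rd y z) z)) z := by
    rw [← h.mul_rd_mul, h.rd_mul_rd]
  funext z
  rw [key x, key x', h.mul_eq_of_rd_eq hx, hy]

theorem rd_ld_congr (h : IsSystemA mul ld rd) {x x' y y' : S} (hx : rd x = rd x')
    (hy : rd y = rd y') : rd (ld x y) = rd (ld x' y') := by
  have key (x y z : S) : rd (ld x y) z = rd (ld x (mul (rd y z) z)) z := by
    rw [← h.mul_rd_ld, h.rd_mul_rd]
  funext z
  rw [key x, key x', h.ld_eq_of_rd_eq hx, hy]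

theorem rd_eq_of_rd_mul_eq (h : IsSystemA mul ld rd) {x x' : S} (y : S)
    (hxy : rd (mul x y) = rd (mul x' y)) : rd x = rd x' := by
  funext z
  rw [← h.rd_rd_mul x y z, hxy, h.rd_rd_mul]

theorem rd_rd_congr (h : IsSystemA mul ld rd) {x x' y y' : S} (hx : rd x = rd x')
    (hy : rd y = rd y') : rd (rd x y) = rd (rd x' y') := by
  refine h.rd_eq_of_rd_mul_eq y ?_
  calc rd (mul (rd x y) y) = rd x := funext (h.rd_mul_rd x y)
    _ = rd (mul (rd x' y') y') := hx.trans (funext (h.rd_mul_rd x' y')).symm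
    _ = rd (mul (rd x' y') y) := h.rd_mul_congr rfl hy.symm

end IsSystemA

/-- An algebra satisfying system (A) satisfies `(x\x)·z = (y\y)·z` iff it is
a right product right loop: there exist a right loop `Q` (a quasigroup with `x\x = y\y`),
a right zero semigroup `R` and an operation-preserving bijection `f : S → Q × R`. -/
theorem systemA_rightLoopIdentity_iff_rightProductRightLoop {S : Type u}
    (mul ld rd : S → S → S)
    (A1 : ∀ x y : S, ld x (mul x y) = y)
    (A2 : ∀ x y : S, mul x (ld x y) = y)
    (A3 : ∀ x y : S, mul (rd x y) y = rd (mul x y) y)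
    (A4 : ∀ x y z : S, rd (mul (rd x y) y) z = rd x z)
    (A5 : ∀ x y z : S, mul (rd (mul x y) z) z = mul x (mul (rd y z) z)) :
    (∀ x y z : S, mul (ld x x) z = mul (ld y y) z)
    ↔
    ∃ (Q : Type u) (R : Type u) (mQ lQ rQ : Q → Q → Q) (mR lR rR : R → R → R)
      (f : S → Q × R),
      (∀ x y, lQ x (mQ x y) = y) ∧
      (∀ x y, mQ x (lQ x y) = y) ∧
      (∀ x y, rQ (mQ x y) y = x) ∧
      (∀ x y, mQ (rQ x y) y = x) ∧
      (∀ x y, lQ x x = lQ y y) ∧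
      (∀ x y, mR x y = y) ∧ (∀ x y, lR x y = y) ∧ (∀ x y, rR x y = y) ∧
      Function.Bijective f ∧
      (∀ x y, f (mul x y) = (mQ (f x).1 (f y).1, mR (f x).2 (f y).2)) ∧
      (∀ x y, f (ld x y) = (lQ (f x).1 (f y).1, lR (f x).2 (f y).2)) ∧
      (∀ x y, f (rd x y) = (rQ (f x).1 (f y).1, rR (f x).2 (f y).2)) := by
  have h : IsSystemA mul ld rd := ⟨A1, A2, A3, A4, A5⟩
  constructor
  · intro hyp
    refine ⟨Quotient (Setoid.ker rd), Quotient (Setoid.ker (rightCoord mul rd)),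
      Quotient.map₂ mul fun _ _ hx _ _ hy => h.rd_mul_congr hx hy,
      Quotient.map₂ ld fun _ _ hx _ _ hy => h.rd_ld_congr hx hy,
      Quotient.map₂ rd fun _ _ hx _ _ hy => h.rd_rd_congr hx hy,
      fun _ v => v, fun _ v => v, fun _ v => v, fun x => (Quotient.mk'' x, Quotient.mk'' x),
      ?_, ?_, ?_, ?_, ?_, fun _ _ => rfl, fun _ _ => rfl, fun _ _ => rfl, ⟨?_, ?_⟩, ?_, ?_, ?_⟩
    · rintro ⟨x⟩ ⟨y⟩; exact Quotient.sound (congrArg rd (h.ld_mul x y))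
    · rintro ⟨x⟩ ⟨y⟩; exact Quotient.sound (congrArg rd (h.mul_ld x y))
    · rintro ⟨x⟩ ⟨y⟩; exact Quotient.sound (funext (h.rd_rd_mul x y))
    · rintro ⟨x⟩ ⟨y⟩; exact Quotient.sound (funext (h.rd_mul_rd x y))
    · rintro ⟨x⟩ ⟨y⟩
      refine Quotient.sound (funext fun z => ?_)
      rw [← h.rd_rd_mul (ld x x) z z, hyp x y z, h.rd_rd_mul]
    · intro x y hxy
      exact h.eq_of_rd_eq_of_rightCoord_eq (Quotient.exact (congrArg Prod.fst hxy))
        (Quotient.exact (congrArg Prod.snd hxy))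
    · rintro ⟨⟨x⟩, ⟨y⟩⟩
      exact ⟨mul (rd x y) y, Prod.ext (Quotient.sound (funext (h.rd_mul_rd x y)))
        (Quotient.sound (h.rightCoord_mul _ _))⟩
    · exact fun x y => Prod.ext rfl (Quotient.sound (h.rightCoord_mul x y))
    · exact fun x y => Prod.ext rfl (Quotient.sound (h.rightCoord_ld x y))
    · exact fun x y => Prod.ext rfl (Quotient.sound (h.rightCoord_rd x y))
  · rintro ⟨Q, R, mQ, lQ, rQ, mR, lR, rR, f, -, -, -, -, hQ, hmR, -, -, hf, hmul, hld, -⟩ x y z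
    apply hf.injective
    simp only [hmul, hld, hmR]
    rw [hQ (f x).1 (f y).1]
end

section
/- Let (S; ·, \, /) be an algebra satisfying system (A) together with the identity (x \ x)·z = (y \ y)·z (i.e., S is a right product right loop), and let a, b ∈ S. Then the equation x·a = b has a solution x ∈ S if and only if a \ a = b \ b. -/
/-!
The map `w ↦ (w / z)·z` fixes every product `g·z` (by (A5), as `(z / z)·z = z`) and commutes with
left division, so it fixes both `s = (g·z) \ (g·z)` and `z \ z`. For a fixed point `t`, (A3) gives
`t = (t·z) / z`, and the right-zero identity `s·z = (z \ z)·z` then forces `s = z \ z`.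
Conversely, if `a \ a = b \ b` then `b·(a \ a) = b`, and (A5) shows that `x = b / a` solves
`x·a = b`.
-/

section RightProductRightLoop

variable {S : Type*} {mul ld rd : S → S → S}

theorem mul_rd_self_self
    (A1 : ∀ x y : S, ld x (mul x y) = y)
    (A4 : ∀ x y z : S, rd (mul (rd x y) y) z = rd x z)
    (A5 : ∀ x y z : S, mul (rd (mul x y) z) z = mul x (mul (rd y z) z))
    (a : S) : mul (rd a a) a = a := by
  have h := A5 (rd a a) a a
  rw [A4] at h
  simpa only [A1] using (congrArg (ld (rd a a)) h).symm

theorem mul_rd_mul_right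
    (A1 : ∀ x y : S, ld x (mul x y) = y)
    (A4 : ∀ x y z : S, rd (mul (rd x y) y) z = rd x z)
    (A5 : ∀ x y z : S, mul (rd (mul x y) z) z = mul x (mul (rd y z) z))
    (g z : S) : mul (rd (mul g z) z) z = mul g z := by
  rw [A5, mul_rd_self_self A1 A4 A5]

theorem mul_rd_ld
    (A1 : ∀ x y : S, ld x (mul x y) = y)
    (A2 : ∀ x y : S, mul x (ld x y) = y)
    (A5 : ∀ x y z : S, mul (rd (mul x y) z) z = mul x (mul (rd y z) z))
    (x w z : S) : mul (rd (ld x w) z) z = ld x (mul (rd w z) z) := by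
  have h := A5 x (ld x w) z
  rw [A2] at h
  simpa only [A1] using (congrArg (ld x) h).symm

theorem mul_rd_ld_self_of_mul_rd_eq
    (A1 : ∀ x y : S, ld x (mul x y) = y)
    (A2 : ∀ x y : S, mul x (ld x y) = y)
    (A5 : ∀ x y z : S, mul (rd (mul x y) z) z = mul x (mul (rd y z) z))
    {s z : S} (hs : mul (rd s z) z = s) : mul (rd (ld s s) z) z = ld s s := by
  rw [mul_rd_ld A1 A2 A5, hs]

theorem ld_self_mul_eq_ld_self
    (A1 : ∀ x y : S, ld x (mul x y) = y)
    (A2 : ∀ x y : S, mul x (ld x y) = y)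
    (A3 : ∀ x y : S, mul (rd x y) y = rd (mul x y) y)
    (A4 : ∀ x y z : S, rd (mul (rd x y) y) z = rd x z)
    (A5 : ∀ x y z : S, mul (rd (mul x y) z) z = mul x (mul (rd y z) z))
    (RL : ∀ x y z : S, mul (ld x x) z = mul (ld y y) z)
    (g z : S) : ld (mul g z) (mul g z) = ld z z := by
  have hgz := mul_rd_ld_self_of_mul_rd_eq A1 A2 A5 (mul_rd_mul_right A1 A4 A5 g z)
  have hz := mul_rd_ld_self_of_mul_rd_eq A1 A2 A5 (mul_rd_self_self A1 A4 A5 z)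
  calc ld (mul g z) (mul g z)
      = rd (mul (ld (mul g z) (mul g z)) z) z := by rw [← A3, hgz]
    _ = rd (mul (ld z z) z) z := by rw [RL (mul g z) z]
    _ = ld z z := by rw [← A3, hz]

theorem mul_rd_eq_of_ld_self_eq
    (A1 : ∀ x y : S, ld x (mul x y) = y)
    (A2 : ∀ x y : S, mul x (ld x y) = y)
    (A4 : ∀ x y z : S, rd (mul (rd x y) y) z = rd x z)
    (A5 : ∀ x y z : S, mul (rd (mul x y) z) z = mul x (mul (rd y z) z))
    {a b : S} (h : ld a a = ld b b) : mul (rd b a) a = b := by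
  have hb : mul b (ld a a) = b := by rw [h, A2]
  calc mul (rd b a) a
      = mul b (mul (rd (ld a a) a) a) := by rw [← A5, hb]
    _ = b := by
      rw [mul_rd_ld_self_of_mul_rd_eq A1 A2 A5 (mul_rd_self_self A1 A4 A5 a), hb]

end RightProductRightLoop

/-- In an algebra satisfying system (A) together with
`(x\x)·z = (y\y)·z` (a right product right loop), the equation `x·a = b` has a
solution iff `a\a = b\b`. -/
theorem eq_xa_b_consistent_iff_rightLoop {S : Type*} (mul ld rd : S → S → S)
    (A1 : ∀ x y : S, ld x (mul x y) = y)
    (A2 : ∀ x y : S, mul x (ld x y) = y)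
    (A3 : ∀ x y : S, mul (rd x y) y = rd (mul x y) y)
    (A4 : ∀ x y z : S, rd (mul (rd x y) y) z = rd x z)
    (A5 : ∀ x y z : S, mul (rd (mul x y) z) z = mul x (mul (rd y z) z))
    (RL : ∀ x y z : S, mul (ld x x) z = mul (ld y y) z)
    (a b : S) :
    (∃ x : S, mul x a = b) ↔ ld a a = ld b b := by
  constructor
  · rintro ⟨x, rfl⟩
    exact (ld_self_mul_eq_ld_self A1 A2 A3 A4 A5 RL x a).symm
  · exact fun h => ⟨rd b a, mul_rd_eq_of_ld_self_eq A1 A2 A4 A5 h⟩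
end
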